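/- Let m, n, h ∈ ℕ with 0 < h ≤ min(m,n), r = m+n−2h, and let T_0, …, T_n be the EPOSIC Kraus operators of Φ_{m,n,h}. Then for every unit vector w ∈ ℂ^{r+1} there exist indices j₁, j₂ with 0 ≤ j₁, j₂ ≤ n such that the vectors T_{j₁}w and T_{j₂}w in ℂ^{m+1} are linearly independent. -/

import Mathlib

open scoped BigOperators Matrix
open Matrix

/-- Binomial coefficient `C(a, b)` with an integer lower argument (zero if `b < 0`),
as a real number. -/
noncomputable def Cb (a : ℕ) (b : ℤ) : ℝ :=
  if 0 ≤ b then (a.choose b.toNat : ℝ) else 0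

/-- The coefficient `β_{i,s,j}` of the EPOSIC channel `Φ_{m,n,h}`. -/
noncomputable def epsBeta (m n h : ℕ) (i s j : ℤ) : ℝ :=
  ((-1 : ℝ) ^ s * Cb h s * Cb (n - h) (j - s) * Cb (m - h) (i - j + s)) /
    Real.sqrt (Cb (m + n - 2 * h) i * Cb m (i - j + h) * Cb n j *
      ∑ k ∈ Finset.range (h + 1),
        (h.choose k : ℝ) ^ 2 / ((m.choose (h - k) : ℝ) * (n.choose k : ℝ)))

/-- The coefficient `ε_i^j = ε_i^j(m,n,h)` of the EPOSIC channel `Φ_{m,n,h}`. -/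
noncomputable def eps (m n h : ℕ) (i j : ℤ) : ℝ :=
  ∑ s ∈ Finset.Icc (max 0 (max (j - i) (j + h - n)))
      (min (h : ℤ) (min j (j + m - i - h))),
    epsBeta m n h i s j

/-- The `j`-th EPOSIC Kraus operator of `Φ_{m,n,h}`: the `(m+1) × (r+1)` matrix
(`r = m + n - 2h`) whose `(i - j + h, i)` entry is `ε_i^j` for
`max{0, j-h} ≤ i ≤ min{r, m-h+j}`, all other entries being `0`. -/
noncomputable def kraus (m n h j : ℕ) : Matrix (Fin (m + 1)) (Fin (m + n - 2 * h + 1)) ℂ :=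
  Matrix.of fun l i =>
    if (l : ℤ) = (i : ℤ) - j + h ∧ max 0 ((j : ℤ) - h) ≤ (i : ℤ) ∧
        (i : ℤ) ≤ min ((m : ℤ) + n - 2 * h) ((m : ℤ) - h + j)
      then ((eps m n h i j : ℝ) : ℂ) else 0

/-- The EPOSIC channel `Φ_{m,n,h}`. -/
noncomputable def eposic (m n h : ℕ)
    (A : Matrix (Fin (m + n - 2 * h + 1)) (Fin (m + n - 2 * h + 1)) ℂ) :
    Matrix (Fin (m + 1)) (Fin (m + 1)) ℂ :=
  ∑ j ∈ Finset.range (n + 1), kraus m n h j * A * (kraus m n h j)ᴴ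

/-!
Each Kraus operator `T_j` is a weighted shift: it sends `e_i` to `ε_i^j e_{i-j+h}`. Let `k` be the
first coordinate with `w_k ≠ 0`, and take `j₂ = min(n, k+h)`, `j₁ = max(0, k+h-m)`; since `h > 0`,
`j₁ < j₂`. For both pairs `(k, j)` the sum defining `ε_k^j` has a single term, so `ε_k^j ≠ 0`. Hence
`T_{j₂} w` is nonzero in coordinate `k+h-j₂`, where `T_{j₁} w` only sees coordinates of `w` below `k`
and vanishes, while `T_{j₁} w` is nonzero in coordinate `k+h-j₁`.
-/

lemma linearIndependent_pair_of_apply {K ι : Type*} [Field K] {x y : ι → K} {a b : ι}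
    (hxa : x a ≠ 0) (hya : y a = 0) (hyb : y b ≠ 0) : LinearIndependent K ![x, y] := by
  rw [linearIndependent_fin2]
  refine ⟨fun hy => hyb (congrFun hy b), fun c hc => hxa ?_⟩
  simpa [hya] using (congrFun hc a).symm

lemma Cb_pos {a : ℕ} {b : ℤ} (hb₀ : 0 ≤ b) (hba : b ≤ a) : 0 < Cb a b := by
  rw [Cb, if_pos hb₀]
  exact_mod_cast Nat.choose_pos (by omega)

lemma sum_choose_sq_div_pos {m n h : ℕ} (hm : h ≤ m) (hn : h ≤ n) :
    0 < ∑ k ∈ Finset.range (h + 1),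
      (h.choose k : ℝ) ^ 2 / ((m.choose (h - k) : ℝ) * (n.choose k : ℝ)) := by
  refine Finset.sum_pos (fun k hk => ?_) ⟨0, by simp⟩
  have hkh : k ≤ h := Nat.lt_succ_iff.mp (Finset.mem_range.mp hk)
  have := Nat.choose_pos hkh
  have := Nat.choose_pos (show h - k ≤ m by omega)
  have := Nat.choose_pos (hkh.trans hn)
  positivity

/-- When the summation range of `ε_i^j` is a single index, `ε_i^j` is that one nonzero term. -/
lemma eps_ne_zero_of_bounds_eq {m n h : ℕ} {i j : ℤ}
    (hb : max 0 (max (j - i) (j + h - n)) = min (h : ℤ) (min j (j + m - i - h))) :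
    eps m n h i j ≠ 0 := by
  set s := min (h : ℤ) (min j (j + m - i - h))
  have hm : h ≤ m := by omega
  have hn : h ≤ n := by omega
  have hnum : (-1 : ℝ) ^ s * Cb h s * Cb (n - h) (j - s) * Cb (m - h) (i - j + s) ≠ 0 := by
    have := Cb_pos (a := h) (b := s) (by omega) (by omega)
    have := Cb_pos (a := n - h) (b := j - s) (by omega) (by omega)
    have := Cb_pos (a := m - h) (b := i - j + s) (by omega) (by omega)
    have : (-1 : ℝ) ^ s ≠ 0 := zpow_ne_zero s (by norm_num)
    positivity
  have hden : 0 < Cb (m + n - 2 * h) i * Cb m (i - j + h) * Cb n j *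
      ∑ k ∈ Finset.range (h + 1),
        (h.choose k : ℝ) ^ 2 / ((m.choose (h - k) : ℝ) * (n.choose k : ℝ)) := by
    have := Cb_pos (a := m + n - 2 * h) (b := i) (by omega) (by omega)
    have := Cb_pos (a := m) (b := i - j + h) (by omega) (by omega)
    have := Cb_pos (a := n) (b := j) (by omega) (by omega)
    have := sum_choose_sq_div_pos hm hn
    positivity
  rw [eps, hb, Finset.Icc_self, Finset.sum_singleton, epsBeta]
  exact div_ne_zero hnum (Real.sqrt_pos.mpr hden).ne'

section kraus

variable {m n h j : ℕ}

lemma kraus_apply_eq_zero_of_ne {l : Fin (m + 1)} {i : Fin (m + n - 2 * h + 1)}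
    (hl : (l : ℤ) ≠ i - j + h) : kraus m n h j l i = 0 := by
  simp [kraus, hl]

lemma kraus_apply_of_eq (hmn : 2 * h ≤ m + n) {l : Fin (m + 1)} {i : Fin (m + n - 2 * h + 1)}
    (hl : (l : ℤ) = i - j + h) : kraus m n h j l i = eps m n h i j := by
  have hi := i.is_lt
  have hl' := l.is_lt
  rw [kraus, of_apply, if_pos ⟨hl, by omega, by omega⟩]

/-- Row `l` of `T_j` has at most one nonzero entry, in column `l + j - h`. -/
lemma kraus_mulVec_apply (v : Fin (m + n - 2 * h + 1) → ℂ) {l : Fin (m + 1)}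
    {i : Fin (m + n - 2 * h + 1)} (hl : (l : ℤ) = i - j + h) :
    (kraus m n h j *ᵥ v) l = kraus m n h j l i * v i := by
  refine Fintype.sum_eq_single i fun i' hi' => ?_
  exact mul_eq_zero_of_left (kraus_apply_eq_zero_of_ne fun hl' => hi' (Fin.ext (by omega))) _

lemma kraus_mulVec_apply_eq_zero {v : Fin (m + n - 2 * h + 1) → ℂ} {l : Fin (m + 1)}
    (hv : ∀ i : Fin (m + n - 2 * h + 1), (l : ℤ) = i - j + h → v i = 0) :
    (kraus m n h j *ᵥ v) l = 0 := by
  rw [mulVec, dotProduct]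
  refine Finset.sum_eq_zero fun i _ => ?_
  by_cases hl : (l : ℤ) = i - j + h
  · rw [hv i hl, mul_zero]
  · rw [kraus_apply_eq_zero_of_ne hl, zero_mul]

lemma kraus_mulVec_apply_ne_zero (hmn : 2 * h ≤ m + n) {v : Fin (m + n - 2 * h + 1) → ℂ}
    {l : Fin (m + 1)} {i : Fin (m + n - 2 * h + 1)} (hl : (l : ℤ) = i - j + h)
    (hε : eps m n h i j ≠ 0) (hv : v i ≠ 0) : (kraus m n h j *ᵥ v) l ≠ 0 := by
  rw [kraus_mulVec_apply v hl, kraus_apply_of_eq hmn hl]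
  exact mul_ne_zero (Complex.ofReal_ne_zero.mpr hε) hv

end kraus

theorem stmt5 (m n h : ℕ) (h0 : 0 < h) (hh : h ≤ min m n)
    (w : EuclideanSpace ℂ (Fin (m + n - 2 * h + 1))) (hw : ‖w‖ = 1) :
    ∃ j₁ j₂ : Fin (n + 1),
      LinearIndependent ℂ
        ![(kraus m n h j₁).mulVec (fun i => w i), (kraus m n h j₂).mulVec (fun i => w i)] := by
  have hw₀ : ∃ i, w i ≠ 0 := by
    by_contra! hw₀
    simp [show w = 0 from PiLp.ext hw₀] at hw
  obtain ⟨k, hk, hmin⟩ : ∃ k, w k ≠ 0 ∧ ∀ i < k, w i = 0 := by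
    obtain ⟨k, hk, hmin⟩ := wellFounded_lt.has_min {i | w i ≠ 0} hw₀
    exact ⟨k, hk, fun i hi => by_contra fun hi' => hmin i hi' hi⟩
  have hkr := k.is_lt
  obtain ⟨j₂, hj₂⟩ : ∃ j : Fin (n + 1), (j : ℕ) = min n (k + h) := ⟨⟨_, by omega⟩, rfl⟩
  obtain ⟨j₁, hj₁⟩ : ∃ j : Fin (n + 1), (j : ℕ) = k + h - m := ⟨⟨_, by omega⟩, rfl⟩
  obtain ⟨a, ha⟩ : ∃ a : Fin (m + 1), (a : ℕ) = k + h - j₂ := ⟨⟨_, by omega⟩, rfl⟩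
  obtain ⟨b, hb⟩ : ∃ b : Fin (m + 1), (b : ℕ) = k + h - j₁ := ⟨⟨_, by omega⟩, rfl⟩
  refine ⟨j₂, j₁, linearIndependent_pair_of_apply (a := a) (b := b) ?_ ?_ ?_⟩
  · exact kraus_mulVec_apply_ne_zero (by omega) (by omega) (eps_ne_zero_of_bounds_eq (by omega)) hk
  · exact kraus_mulVec_apply_eq_zero fun i hi => hmin i (by omega)
  · exact kraus_mulVec_apply_ne_zero (by omega) (by omega) (eps_ne_zero_of_bounds_eq (by omega)) hk
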